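/- arXiv:2307.10124 — 5 statements merged into one kernel-verified Lean document; each statement's English description precedes it below -/
import Mathlib

section
/- Let R be a Noetherian ring and I_1,…,I_s ⊆ R ideals of positive grade. For each i fix a generating set {f_{ij} : j=1,…,n_i} of I_i containing a nonzerodivisor f_{i j_i}, and set h = ∏_{i=1}^s f_{i j_i}. Let φ : R[Y_{ij}] → R[T_1,…,T_s] be the R-algebra map sending Y_{ij} ↦ f_{ij}T_i. Then ker φ equals the saturation ⟨Y_{ij} f_{ij'} − Y_{ij'} f_{ij} : 1 ≤ i ≤ s, j ≠ j'⟩ : h^∞, i.e., this saturated ideal is the defining ideal of the multi-Rees algebra R(I_1,…,I_s). -/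
/-!
Modulo the relations `L`, `f_{ij₀} Y_{ij} ≡ f_{ij} Y_{ij₀}`, so `h Y_{ij}` is congruent to a
polynomial in the distinguished variables `Y_{ij₀}`. The elements `x` with `h^m x ∈ R[Y_{ij₀}] + L`
for some `m` form a subalgebra (as `h ∈ R[Y_{ij₀}]`), hence every `r` has `h^m r ≡ q(Y_{ij₀})`.
If `φ r = 0` then `φ q = 0`; but `φ` sends `Y_{ij₀}` to `f_{ij₀} T_i`, which scales the coefficient
of `T^d` by the nonzerodivisor `∏ f_{ij₀}^{d_i}`, so `q = 0` and `h^m r ∈ L`. Conversely `φ`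
kills `L` and `h` is a nonzerodivisor of `R[T]`.
-/

open MvPolynomial
open scoped nonZeroDivisors

namespace MvPolynomial

variable {R σ : Type*} [CommRing R]

theorem aeval_C_mul_X_monomial (c : σ → R) (v : σ →₀ ℕ) (r : R) :
    aeval (fun i => C (c i) * X i) (monomial v r) =
      monomial v ((v.prod fun i k => c i ^ k) * r) := by
  simp only [aeval_monomial, mul_pow, Finsupp.prod_mul, ← map_pow, ← map_finsuppProd,
    algebraMap_eq]
  rw [monomial_eq, C_mul]
  ring

theorem coeff_aeval_C_mul_X (c : σ → R) (q : MvPolynomial σ R) (d : σ →₀ ℕ) :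
    coeff d (aeval (fun i => C (c i) * X i) q) = (d.prod fun i k => c i ^ k) * coeff d q := by
  classical
  induction q using MvPolynomial.induction_on' with
  | monomial v r =>
    rw [aeval_C_mul_X_monomial, coeff_monomial, coeff_monomial]
    split_ifs with hv
    · rw [hv]
    · rw [mul_zero]
  | add p q hp hq => rw [map_add, coeff_add, coeff_add, hp, hq, mul_add]

theorem aeval_C_mul_X_injective {c : σ → R} (hc : ∀ i, c i ∈ R⁰) :
    Function.Injective (aeval (R := R) fun i => C (c i) * X i) := by
  refine (injective_iff_map_eq_zero _).2 fun q hq => ?_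
  ext d
  have hd : (d.prod fun i k => c i ^ k) ∈ R⁰ := prod_mem fun i _ => pow_mem (hc i) _
  rw [coeff_zero, ← mul_left_mem_nonZeroDivisors_eq_zero_iff hd, ← coeff_aeval_C_mul_X, hq,
    coeff_zero]

theorem C_mem_nonZeroDivisors {a : R} (ha : a ∈ R⁰) :
    (C a : MvPolynomial σ R) ∈ (MvPolynomial σ R)⁰ := by
  refine mem_nonZeroDivisors_iff_left.2 fun p hp => ?_
  ext d
  rw [coeff_zero, ← mul_left_mem_nonZeroDivisors_eq_zero_iff ha, ← coeff_C_mul, hp, coeff_zero]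

end MvPolynomial

theorem Algebra.exists_pow_mul_mem_of_mem_adjoin {R S : Type*} [CommRing R] [CommRing S]
    [Algebra R S] {A : Subalgebra R S} {a : S} (ha : a ∈ A) {s : Set S}
    (hs : ∀ x ∈ s, ∃ m : ℕ, a ^ m * x ∈ A) {x : S} (hx : x ∈ Algebra.adjoin R s) :
    ∃ m : ℕ, a ^ m * x ∈ A := by
  induction hx using Algebra.adjoin_induction with
  | mem x hx => exact hs x hx
  | algebraMap r => exact ⟨0, by simp [A.algebraMap_mem r]⟩
  | add x y _ _ hx hy =>
    obtain ⟨m, hm⟩ := hx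
    obtain ⟨k, hk⟩ := hy
    refine ⟨m + k, ?_⟩
    have : a ^ (m + k) * (x + y) = a ^ k * (a ^ m * x) + a ^ m * (a ^ k * y) := by ring
    rw [this]
    exact add_mem (mul_mem (pow_mem ha k) hm) (mul_mem (pow_mem ha m) hk)
  | mul x y _ _ hx hy =>
    obtain ⟨m, hm⟩ := hx
    obtain ⟨k, hk⟩ := hy
    refine ⟨m + k, ?_⟩
    rw [show a ^ (m + k) * (x * y) = (a ^ m * x) * (a ^ k * y) by ring]
    exact mul_mem hm hk

namespace MultiRees

variable {R ι : Type*} [CommRing R] {κ : ι → Type*} (f : (i : ι) → κ i → R)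

noncomputable def reesMap : MvPolynomial (Σ i, κ i) R →ₐ[R] MvPolynomial ι R :=
  aeval fun p => C (f p.1 p.2) * X p.1

noncomputable def reesRelations : Ideal (MvPolynomial (Σ i, κ i) R) :=
  Ideal.span {g | ∃ (i : ι) (j j' : κ i), j ≠ j' ∧
    g = X (⟨i, j⟩ : Σ i, κ i) * C (f i j') - X (⟨i, j'⟩ : Σ i, κ i) * C (f i j)}

theorem range_reesMap :
    (reesMap f).range = Algebra.adjoin R {x : MvPolynomial ι R | ∃ i j, x = C (f i j) * X i} := by
  rw [reesMap, ← Algebra.adjoin_range_eq_range_aeval]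
  congr 1
  ext x
  simp [eq_comm]

theorem X_mul_C_sub_mem_reesRelations (i : ι) (j j' : κ i) :
    X ⟨i, j⟩ * C (f i j') - X ⟨i, j'⟩ * C (f i j) ∈ reesRelations f := by
  by_cases hj : j = j'
  · rw [hj, sub_self]
    exact zero_mem _
  · exact Ideal.subset_span ⟨i, j, j', hj, rfl⟩

theorem reesRelations_le_ker : reesRelations f ≤ RingHom.ker (reesMap f) := by
  rw [reesRelations, Ideal.span_le]
  rintro x ⟨i, j, j', -, rfl⟩
  simp only [SetLike.mem_coe, RingHom.mem_ker, reesMap, map_sub, map_mul, aeval_X, aeval_C,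
    algebraMap_eq]
  ring

theorem reesMap_rename (j₀ : (i : ι) → κ i) (q : MvPolynomial ι R) :
    reesMap f (rename (fun i => (⟨i, j₀ i⟩ : Σ i, κ i)) q) =
      aeval (fun i => C (f i (j₀ i)) * X i) q := by
  rw [reesMap, aeval_rename]
  rfl

variable [Fintype ι]

theorem exists_pow_mul_sub_rename_mem_reesRelations (j₀ : (i : ι) → κ i)
    (r : MvPolynomial (Σ i, κ i) R) :
    ∃ (m : ℕ) (q : MvPolynomial ι R),
      C (∏ i, f i (j₀ i)) ^ m * r - rename (fun i => ⟨i, j₀ i⟩) q ∈ reesRelations f := by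
  set L := reesRelations f
  set A : Subalgebra R (MvPolynomial (Σ i, κ i) R) := Subalgebra.comap (Ideal.Quotient.mkₐ R L)
    ((Ideal.Quotient.mkₐ R L).comp (rename fun i => ⟨i, j₀ i⟩)).range
  have mem_A : ∀ x, x ∈ A ↔ ∃ q, x - rename (fun i => ⟨i, j₀ i⟩) q ∈ L := fun x => by
    simp only [A, Subalgebra.mem_comap, AlgHom.mem_range, AlgHom.comp_apply,
      Ideal.Quotient.mkₐ_eq_mk, Ideal.Quotient.eq]
    exact exists_congr fun q => sub_mem_comm_iff
  have hC : C (∏ i, f i (j₀ i)) ∈ A :=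
    (mem_A _).2 ⟨C (∏ i, f i (j₀ i)), by rw [rename_C, sub_self]; exact zero_mem L⟩
  have hX : ∀ x ∈ Set.range X, ∃ m : ℕ, C (∏ i, f i (j₀ i)) ^ m * x ∈ A := by
    rintro _ ⟨⟨i, j⟩, rfl⟩
    obtain ⟨c, hc⟩ := Finset.dvd_prod_of_mem (fun i => f i (j₀ i)) (Finset.mem_univ i)
    refine ⟨1, (mem_A _).2 ⟨C (c * f i j) * X i, ?_⟩⟩
    have hsplit : C (∏ i, f i (j₀ i)) ^ 1 * X (⟨i, j⟩ : Σ i, κ i) -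
        rename (fun i => (⟨i, j₀ i⟩ : Σ i, κ i)) (C (c * f i j) * X i) =
        C c * (X ⟨i, j⟩ * C (f i (j₀ i)) - X ⟨i, j₀ i⟩ * C (f i j)) := by
      simp only [pow_one, hc, map_mul, rename_C, rename_X]
      ring
    rw [hsplit]
    exact Ideal.mul_mem_left _ _ (X_mul_C_sub_mem_reesRelations f i j (j₀ i))
  obtain ⟨m, hm⟩ := Algebra.exists_pow_mul_mem_of_mem_adjoin hC hX
    (adjoin_range_X (R := R) ▸ Algebra.mem_top)
  exact ⟨m, (mem_A _).1 hm⟩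

theorem mem_ker_reesMap_iff {j₀ : (i : ι) → κ i} (hj₀ : ∀ i, f i (j₀ i) ∈ R⁰)
    (r : MvPolynomial (Σ i, κ i) R) :
    r ∈ RingHom.ker (reesMap f) ↔ ∃ m : ℕ, C (∏ i, f i (j₀ i)) ^ m * r ∈ reesRelations f := by
  constructor
  · intro hr
    obtain ⟨m, q, hq⟩ := exists_pow_mul_sub_rename_mem_reesRelations f j₀ r
    have hq0 : q = 0 := by
      have hker := reesRelations_le_ker f hq
      rw [RingHom.mem_ker, map_sub, map_mul, RingHom.mem_ker.1 hr, mul_zero, zero_sub,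
        neg_eq_zero, reesMap_rename] at hker
      exact aeval_C_mul_X_injective hj₀ (hker.trans (map_zero _).symm)
    rw [hq0, map_zero, sub_zero] at hq
    exact ⟨m, hq⟩
  · rintro ⟨m, hm⟩
    have hker := RingHom.mem_ker.1 (reesRelations_le_ker f hm)
    rw [map_mul, ← C_pow, algHom_C] at hker
    have hh : (∏ i, f i (j₀ i)) ∈ R⁰ := prod_mem fun i _ => hj₀ i
    exact mem_nonZeroDivisors_iff_left.1 (C_mem_nonZeroDivisors (pow_mem hh m)) _ hker

end MultiRees

open MultiRees

theorem multiRees_defining_ideal_general {R : Type*} [CommRing R] {s : ℕ}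
    (n : Fin s → ℕ) (f : (i : Fin s) → Fin (n i) → R)
    (j₀ : (i : Fin s) → Fin (n i))
    (hnzd : ∀ i, f i (j₀ i) ∈ nonZeroDivisors R)
    (h : R) (hh : h = ∏ i, f i (j₀ i))
    (φ : MvPolynomial (Σ i, Fin (n i)) R →ₐ[R] MvPolynomial (Fin s) R)
    (hφ : φ = aeval (fun p : Σ i, Fin (n i) => C (f p.1 p.2) * X p.1))
    (L : Ideal (MvPolynomial (Σ i, Fin (n i)) R))
    (hL : L = Ideal.span {g | ∃ (i : Fin s) (j j' : Fin (n i)), j ≠ j' ∧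
      g = X (⟨i, j⟩ : Σ i, Fin (n i)) * C (f i j') - X (⟨i, j'⟩ : Σ i, Fin (n i)) * C (f i j)}) :
    -- the image of `φ` is the multi-Rees algebra `R(I_1,…,I_s)`
    φ.range = Algebra.adjoin R {x : MvPolynomial (Fin s) R | ∃ i j, x = C (f i j) * X i} ∧
    -- and its kernel is the saturation `L : h^∞`
    ∀ r : MvPolynomial (Σ i, Fin (n i)) R,
      r ∈ RingHom.ker φ.toRingHom ↔ ∃ m : ℕ, (C h) ^ m * r ∈ L := by
  subst hφ hL hh
  exact ⟨range_reesMap f, mem_ker_reesMap_iff f hnzd⟩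

/-- Theorem (defining ideal of the multi-Rees algebra): for ideals `I i` of positive grade
in a Noetherian ring `R`, with generating sets `f i j` containing nonzerodivisors `f i (j₀ i)`,
and `h = ∏ i, f i (j₀ i)`, the kernel of `φ : R[Y_{ij}] → R[T_i]`, `Y_{ij} ↦ f_{ij} T_i`
(whose image is the multi-Rees algebra) is the saturation `⟨Y_{ij} f_{ij'} − Y_{ij'} f_{ij}⟩ : h^∞`. -/
theorem multiRees_defining_ideal {R : Type*} [CommRing R] [IsNoetherianRing R] {s : ℕ}
    (I : Fin s → Ideal R) (n : Fin s → ℕ) (f : (i : Fin s) → Fin (n i) → R)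
    (hgen : ∀ i, Ideal.span (Set.range (f i)) = I i)
    (j₀ : (i : Fin s) → Fin (n i))
    (hnzd : ∀ i, f i (j₀ i) ∈ nonZeroDivisors R)
    (h : R) (hh : h = ∏ i, f i (j₀ i))
    (φ : MvPolynomial (Σ i, Fin (n i)) R →ₐ[R] MvPolynomial (Fin s) R)
    (hφ : φ = aeval (fun p : Σ i, Fin (n i) => C (f p.1 p.2) * X p.1))
    (L : Ideal (MvPolynomial (Σ i, Fin (n i)) R))
    (hL : L = Ideal.span {g | ∃ (i : Fin s) (j j' : Fin (n i)), j ≠ j' ∧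
      g = X (⟨i, j⟩ : Σ i, Fin (n i)) * C (f i j') - X (⟨i, j'⟩ : Σ i, Fin (n i)) * C (f i j)}) :
    -- the image of `φ` is the multi-Rees algebra `R(I_1,…,I_s)`
    φ.range = Algebra.adjoin R {x : MvPolynomial (Fin s) R | ∃ i j, x = C (f i j) * X i} ∧
    -- and its kernel is the saturation `L : h^∞`
    ∀ r : MvPolynomial (Σ i, Fin (n i)) R,
      r ∈ RingHom.ker φ.toRingHom ↔ ∃ m : ℕ, (C h) ^ m * r ∈ L :=
  multiRees_defining_ideal_general n f j₀ hnzd h hh φ hφ L hL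
end

section
/- Let R be a commutative Noetherian ring and J an ideal admitting a minimal primary decomposition J = (⋂_{i=1}^r Q_i) ∩ Q where Q is m-primary for a maximal ideal m, and √Q_i = P_i ⊄ m for all i. Then J : (J : m^∞) = Q, where J : m^∞ = ⋂_{i=1}^r Q_i. -/
/-!
Every component `Qs i` is primary with radical not contained in `m`, hence not containing any
power of `m`; so colon by `m ^ k` does not change it, while `Q` swallows a power of `m` because
the ring is Noetherian. This gives `J : m^∞ = ⋂ i, Qs i`. Dually, `⋂ i, Qs i ⊄ m = √Q`, so
colon by it fixes the primary ideal `Q` and kills every other component.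
-/

namespace Ideal

open Submodule

variable {R : Type*} [CommRing R]

theorem IsPrimary.colon_eq_self {Q I : Ideal R} (hQ : Q.IsPrimary) (hI : ¬I ≤ Q.radical) :
    Q.colon (I : Set R) = Q := by
  refine le_antisymm (fun x hx => ?_) le_colon
  obtain ⟨y, hyI, hyQ⟩ := Set.not_subset.mp hI
  exact ((isPrimary_iff.mp hQ).2 (mem_colon.mp hx y hyI)).resolve_right hyQ

theorem IsMaximal.not_pow_le_of_not_le {m P : Ideal R} (hm : m.IsMaximal) [hP : P.IsPrime]
    (hPm : ¬P ≤ m) (k : ℕ) : ¬m ^ k ≤ P := fun h =>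
  hPm (hm.eq_of_le hP.ne_top (hP.le_of_pow_le h)).ge

theorem IsPrimary.colon_pow_eq_self {Q m : Ideal R} (hQ : Q.IsPrimary) (hm : m.IsMaximal)
    (hQm : ¬Q.radical ≤ m) (k : ℕ) : Q.colon ((m ^ k : Ideal R) : Set R) = Q :=
  have := isPrime_radical hQ
  hQ.colon_eq_self (hm.not_pow_le_of_not_le hQm k)

theorem iSup_inf_colon_pow_eq_left {N Q m : Ideal R} {n : ℕ}
    (hN : ∀ k, N.colon ((m ^ k : Ideal R) : Set R) = N) (hQ : m ^ n ≤ Q) :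
    ⨆ k : ℕ, (N ⊓ Q).colon ((m ^ k : Ideal R) : Set R) = N := by
  refine le_antisymm (iSup_le fun k => (colon_mono inf_le_left subset_rfl).trans_eq (hN k)) ?_
  refine le_iSup_of_le n ?_
  rw [inf_colon, (colon_eq_top_iff_subset _).mpr hQ, inf_top_eq]
  exact le_colon

end Ideal

open Ideal Submodule in
theorem colon_saturation_recovers_primary_component_general {R : Type*} [CommRing R]
    [IsNoetherianRing R] (m : Ideal R) (hm : m.IsMaximal)
    {r : ℕ} (Q : Ideal R) (Qs : Fin r → Ideal R) (J : Ideal R)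
    (hQ : Q.IsPrimary) (hQm : Q.radical = m)
    (hQi : ∀ i, (Qs i).IsPrimary) (hPi : ∀ i, ¬ (Qs i).radical ≤ m)
    (hJ : J = (⨅ i, Qs i) ⊓ Q)
    (Jsat : Ideal R) (hJsat : Jsat = ⨆ k : ℕ, J.colon ((m ^ k : Ideal R) : Set R)) :
    Jsat = (⨅ i, Qs i) ∧ J.colon Jsat = Q := by
  have hNm : ¬(⨅ i, Qs i) ≤ m := by
    rw [← Finset.inf_univ_eq_iInf, hm.isPrime.inf_le']
    rintro ⟨i, -, hi⟩
    exact hPi i (hm.isPrime.radical_le_iff.mpr hi)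
  obtain ⟨n, hn⟩ := Q.exists_radical_pow_le_of_fg (IsNoetherian.noetherian _)
  have hsat : Jsat = ⨅ i, Qs i := by
    rw [hJsat, hJ]
    refine iSup_inf_colon_pow_eq_left (fun k => ?_) (hQm ▸ hn)
    rw [iInf_colon]
    exact iInf_congr fun i => (hQi i).colon_pow_eq_self hm (hPi i) k
  refine ⟨hsat, ?_⟩
  rw [hsat, hJ, inf_colon, (colon_eq_top_iff_subset _).mpr subset_rfl, top_inf_eq,
    hQ.colon_eq_self (hQm ▸ hNm)]

/-- For a minimal primary decomposition `J = (⋂ i, Qs i) ⊓ Q` with `Q` `m`-primary for a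
maximal ideal `m` and `√(Qs i) = P i ⊄ m`, the saturation `J : m^∞` equals `⋂ i, Qs i`
and `J : (J : m^∞) = Q`. -/
theorem colon_saturation_recovers_primary_component {R : Type*} [CommRing R]
    [IsNoetherianRing R] (m : Ideal R) (hm : m.IsMaximal)
    {r : ℕ} (Q : Ideal R) (Qs : Fin r → Ideal R) (J : Ideal R)
    (hQ : Q.IsPrimary) (hQm : Q.radical = m)
    (hQi : ∀ i, (Qs i).IsPrimary) (hPi : ∀ i, ¬ (Qs i).radical ≤ m)
    (hJ : J = (⨅ i, Qs i) ⊓ Q)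
    -- minimality of the decomposition: distinct radicals and irredundancy
    (hdist : ∀ i j, i ≠ j → (Qs i).radical ≠ (Qs j).radical)
    (hirr : ∀ i, ¬ ((⨅ j ∈ ({i}ᶜ : Set (Fin r)), Qs j) ⊓ Q ≤ Qs i))
    (hirrQ : ¬ (⨅ i, Qs i) ≤ Q)
    (Jsat : Ideal R) (hJsat : Jsat = ⨆ k : ℕ, J.colon ((m ^ k : Ideal R) : Set R)) :
    Jsat = (⨅ i, Qs i) ∧ J.colon Jsat = Q :=
  colon_saturation_recovers_primary_component_general m hm Q Qs J hQ hQm hQi hPi hJ Jsat hJsat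
end

section
/- Let R be a commutative Noetherian ring, m a maximal ideal, and J an ideal such that the localization J R_m is m R_m-primary. Then the natural map R/(J : (J : m^∞)) → R_m/(J R_m) induced by the localization homomorphism R → R_m is an isomorphism of R-modules. -/
/-!
Write `S = R_m` and `I = J S`. As `S` is Noetherian with `√I = m S`, some `m^n S ⊆ I`, so
`R → S/I` factors through the isomorphism `R/m^n ≅ S/m^n S` and is surjective. Its kernel is
`I ∩ R = {x | s x ∈ J for some s ∉ m}`, and this is `J : (J : m^∞)`. If `s x ∈ J` and
`y m^k ⊆ J`, then writing `1 = a s + b` with `b ∈ m^k` gives `x y = a y (s x) + x (y b) ∈ J`.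
Conversely, clearing the denominators of finitely many generators of `m^n` (all lying in
`I`) yields `s ∉ m` with `s m^n ⊆ J`, so `s ∈ J : m^∞`, and `x (J : m^∞) ⊆ J` gives
`s x ∈ J`.
-/

open IsLocalRing

namespace Ideal

variable {R : Type*} [CommRing R]

/-- `J : m^∞`. -/
def saturation (J m : Ideal R) : Ideal R :=
  ⨆ n : ℕ, J.colon ((m ^ n : Ideal R) : Set R)

theorem colon_pow_le_saturation (J m : Ideal R) (n : ℕ) :
    J.colon ((m ^ n : Ideal R) : Set R) ≤ J.saturation m :=
  le_iSup (fun n : ℕ ↦ J.colon ((m ^ n : Ideal R) : Set R)) n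

theorem mul_mem_of_mul_mem_of_mem_colon_pow {m J : Ideal R} [m.IsMaximal] {s x y : R}
    (hs : s ∉ m) (hsx : s * x ∈ J) {n : ℕ} (hy : y ∈ J.colon ((m ^ n : Ideal R) : Set R)) :
    x * y ∈ J := by
  obtain ⟨a, b, hb, hab⟩ := IsMaximal.exists_inv_pow m hs n
  have hyb : y * b ∈ J := Submodule.mem_colon.mp hy b hb
  have hxy : x * y = a * y * (s * x) + x * (y * b) := by linear_combination (-(x * y)) * hab
  rw [hxy]
  exact J.add_mem (J.mul_mem_left _ hsx) (J.mul_mem_left _ hyb)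

theorem mul_mem_of_mul_mem_of_mem_saturation {m J : Ideal R} [m.IsMaximal] {s x y : R}
    (hs : s ∉ m) (hsx : s * x ∈ J) (hy : y ∈ J.saturation m) : x * y ∈ J :=
  Submodule.iSup_induction _ (motive := fun y ↦ x * y ∈ J) hy
    (fun _ _ hy ↦ mul_mem_of_mul_mem_of_mem_colon_pow hs hsx hy) (by simp)
    (fun y z hy hz ↦ by rw [mul_add]; exact J.add_mem hy hz)

end Ideal

open Ideal

theorem IsLocalization.exists_mem_colon_of_map_le {R : Type*} [CommRing R] (M : Submonoid R)
    (S : Type*) [CommRing S] [Algebra R S] [IsLocalization M S] {K J : Ideal R} (hK : K.FG)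
    (hKJ : K.map (algebraMap R S) ≤ J.map (algebraMap R S)) :
    ∃ s ∈ M, s ∈ J.colon (K : Set R) := by
  classical
  obtain ⟨T, rfl⟩ := hK
  have : ∀ t ∈ T, ∃ s ∈ M, s * t ∈ J := fun t ht ↦
    (algebraMap_mem_map_algebraMap_iff M S J t).mp (hKJ (mem_map_of_mem _ (subset_span ht)))
  choose! s hsM hsJ using this
  refine ⟨∏ t ∈ T, s t, prod_mem hsM, ?_⟩
  rw [Ideal.colon_span, Submodule.mem_colon]
  intro t ht
  rw [smul_eq_mul, ← Finset.mul_prod_erase T s ht, mul_right_comm]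
  exact J.mul_mem_right _ (hsJ t ht)

noncomputable def Ideal.quotientUnderAlgEquivOfSurjective {R S : Type*} [CommRing R] [CommRing S]
    [Algebra R S] {I : Ideal S} (h : Function.Surjective (algebraMap R (S ⧸ I))) :
    (R ⧸ I.under R) ≃ₐ[R] S ⧸ I :=
  (quotientEquivAlgOfEq R <| by
      ext; simp [← Quotient.mk_algebraMap, Quotient.eq_zero_iff_mem]).trans
    (quotientKerAlgEquivOfSurjective (f := Algebra.ofId R (S ⧸ I)) h)

namespace IsLocalization.AtPrime

theorem algebraMap_quotient_surjective_of_maximalIdeal_pow_le {R : Type*} [CommRing R]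
    (m : Ideal R) [m.IsMaximal] {S : Type*} [CommRing S] [Algebra R S]
    [IsLocalization.AtPrime S m] [IsLocalRing S] {I : Ideal S} {n : ℕ}
    (h : maximalIdeal S ^ n ≤ I) : Function.Surjective (algebraMap R (S ⧸ I)) := by
  intro z
  obtain ⟨y, rfl⟩ := Ideal.Quotient.mk_surjective z
  obtain ⟨x, hx⟩ := Ideal.Quotient.mk_surjective
    ((equivQuotMaximalIdealPow m S n).symm (Ideal.Quotient.mk _ y))
  have hxy : Ideal.Quotient.mk (maximalIdeal S ^ n) (algebraMap R S x) = Ideal.Quotient.mk _ y := by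
    simpa using congrArg (equivQuotMaximalIdealPow m S n) hx
  refine ⟨x, ?_⟩
  rw [← Ideal.Quotient.mk_algebraMap]
  exact Ideal.Quotient.eq.mpr (h (Ideal.Quotient.eq.mp hxy))

variable {R : Type*} [CommRing R] (m : Ideal R) [m.IsMaximal] (S : Type*) [CommRing S]
  [Algebra R S] [IsLocalization.AtPrime S m]

theorem under_map_le_colon_saturation (J : Ideal R) :
    (J.map (algebraMap R S)).under R ≤ J.colon (J.saturation m : Set R) := by
  intro x hx
  obtain ⟨s, hs, hsx⟩ := (algebraMap_mem_map_algebraMap_iff m.primeCompl S J x).mp hx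
  exact Submodule.mem_colon.mpr fun y hy ↦ mul_mem_of_mul_mem_of_mem_saturation hs hsx hy

theorem colon_saturation_le_under_map [IsNoetherianRing R] {J : Ideal R} {n : ℕ}
    (h : (m ^ n).map (algebraMap R S) ≤ J.map (algebraMap R S)) :
    J.colon (J.saturation m : Set R) ≤ (J.map (algebraMap R S)).under R := by
  intro x hx
  obtain ⟨s, hs, hsJ⟩ := exists_mem_colon_of_map_le m.primeCompl S (IsNoetherian.noetherian _) h
  have hxs : x * s ∈ J := Submodule.mem_colon.mp hx s (colon_pow_le_saturation J m n hsJ)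
  exact (algebraMap_mem_map_algebraMap_iff m.primeCompl S J x).mpr ⟨s, hs, mul_comm x s ▸ hxs⟩

theorem under_map_eq_colon_saturation [IsNoetherianRing R] {J : Ideal R} {n : ℕ}
    (h : (m ^ n).map (algebraMap R S) ≤ J.map (algebraMap R S)) :
    (J.map (algebraMap R S)).under R = J.colon (J.saturation m : Set R) :=
  (under_map_le_colon_saturation m S J).antisymm (colon_saturation_le_under_map m S h)

end IsLocalization.AtPrime

open IsLocalization.AtPrime in
theorem quotient_iso_localization_general {R : Type*} [CommRing R] [IsNoetherianRing R]
    (m : Ideal R) [m.IsMaximal] (J : Ideal R)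
    (hrad : (J.map (algebraMap R (Localization.AtPrime m))).radical
      = m.map (algebraMap R (Localization.AtPrime m)))
    (Jsat : Ideal R) (hJsat : Jsat = ⨆ k : ℕ, J.colon ((m ^ k : Ideal R) : Set R)) :
    ∃ e : (R ⧸ J.colon Jsat) ≃ₗ[R]
        (Localization.AtPrime m ⧸ J.map (algebraMap R (Localization.AtPrime m))),
      ∀ x : R, e (Ideal.Quotient.mk (J.colon Jsat) x)
        = Ideal.Quotient.mk (J.map (algebraMap R (Localization.AtPrime m)))
            (algebraMap R (Localization.AtPrime m) x) := by
  set S := Localization.AtPrime m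
  obtain ⟨n, hn⟩ :=
    (J.map (algebraMap R S)).exists_radical_pow_le_of_fg (IsNoetherian.noetherian _)
  rw [hrad, ← Ideal.map_pow] at hn
  have hker : (J.map (algebraMap R S)).under R = J.colon Jsat :=
    hJsat ▸ under_map_eq_colon_saturation m S hn
  have hsurj := algebraMap_quotient_surjective_of_maximalIdeal_pow_le m
    (I := J.map (algebraMap R S)) (n := n) (by rwa [← map_eq_maximalIdeal m S, ← Ideal.map_pow])
  exact ⟨((quotientEquivAlgOfEq R hker.symm).trans
    (quotientUnderAlgEquivOfSurjective hsurj)).toLinearEquiv, fun x ↦ rfl⟩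

/-- If `J R_m` is `m R_m`-primary, then the natural map
`R/(J : (J : m^∞)) → R_m/(J R_m)` is an isomorphism of `R`-modules. -/
theorem quotient_iso_localization {R : Type*} [CommRing R] [IsNoetherianRing R]
    (m : Ideal R) [m.IsMaximal] (J : Ideal R)
    (hprim : (J.map (algebraMap R (Localization.AtPrime m))).IsPrimary)
    (hrad : (J.map (algebraMap R (Localization.AtPrime m))).radical
      = m.map (algebraMap R (Localization.AtPrime m)))
    (Jsat : Ideal R) (hJsat : Jsat = ⨆ k : ℕ, J.colon ((m ^ k : Ideal R) : Set R)) :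
    ∃ e : (R ⧸ J.colon Jsat) ≃ₗ[R]
        (Localization.AtPrime m ⧸ J.map (algebraMap R (Localization.AtPrime m))),
      ∀ x : R, e (Ideal.Quotient.mk (J.colon Jsat) x)
        = Ideal.Quotient.mk (J.map (algebraMap R (Localization.AtPrime m)))
            (algebraMap R (Localization.AtPrime m) x) :=
  quotient_iso_localization_general m J hrad Jsat hJsat
end

section
/- Let R = ℂ[x,y,z] (or ℚ[x,y,z]) and F_0 = z^5 + x y^7 + x^{15}. The Jacobian ideal J(F_0) = (y^7 + 15x^{14}, 7x y^6, 5z^4) is primary to m = (x,y,z), and the multiplicity (colength under this system-of-parameters situation computed as Hilbert–Samuel multiplicity) e(y^7+15x^{14}, x y^6, z^4) of the ideal generated by the parameter system (y^7+15x^{14}, x y^6, z^4) equals 364. -/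
/-!
With respect to the lexicographic order `x > y > z`, the `S`-polynomial of `y^7 + 15x^14` and
`xy^6` is `y^13 / 15`, so the initial ideal of `I = (y^7 + 15x^14, xy^6, z^4)` is
`(x^14, xy^6, y^13, z^4)`. The `91 · 4 = 364` monomials `x^a y^b z^c` outside it (`c ≤ 3`, and
`a = 0, b ≤ 12` or `a ≤ 13, b ≤ 5`) form a basis of the quotient: they span it modulo `I` because
`x^15, y^13 ∈ I` and `x^14 ≡ -y^7/15`, and they are independent because suitably corrected
coefficient functionals vanish on `I` and are dual to them. The same powers `x^15, y^13, z^4 ∈ I`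
show that `√I = (x, y, z)`, a maximal ideal, so `I` is primary.
-/

open MvPolynomial

theorem LinearMap.map_eq_zero_of_mem_ideal_span {k A M : Type*} [CommSemiring k] [CommSemiring A]
    [Algebra k A] [AddCommMonoid M] [Module k M] (φ : A →ₗ[k] M) {S : Set A}
    (hS : ∀ s ∈ S, ∀ q, φ (q * s) = 0) {a : A} (ha : a ∈ Ideal.span S) : φ a = 0 := by
  suffices ∀ q, φ (q * a) = 0 by simpa using this 1
  induction ha using Submodule.span_induction with
  | mem s hs => exact hS s hs
  | zero => simp
  | add x y _ _ hx hy => intro q; rw [mul_add, map_add, hx, hy, add_zero]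
  | smul r x _ hx => intro q; rw [smul_eq_mul, ← mul_assoc, hx]

theorem Ideal.finrank_quotient_eq_card_of_dual {k A ι : Type*} [Field k] [CommRing A]
    [Algebra k A] [Fintype ι] [DecidableEq ι] (I : Ideal A) (b : ι → A) (φ : A →ₗ[k] ι → k)
    (hφI : ∀ a ∈ I, φ a = 0) (hφb : ∀ i, φ (b i) = Pi.single i 1)
    (hspan : Submodule.span k (Set.range b) ⊔ I.restrictScalars k = ⊤) :
    Module.finrank k (A ⧸ I) = Fintype.card ι := by
  let mk := (Ideal.Quotient.mkₐ k I).toLinearMap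
  let ψ : A ⧸ I →ₗ[k] ι → k :=
    (I.restrictScalars k).liftQ φ hφI ∘ₗ (Submodule.Quotient.restrictScalarsEquiv k I).symm
  have hli : LinearIndependent k (mk ∘ b) := by
    refine LinearIndependent.of_comp ψ ?_
    convert (Pi.basisFun k ι).linearIndependent using 1
    exact funext fun i => (hφb i).trans (Pi.basisFun_apply k ι i).symm
  have hI : (I.restrictScalars k).map mk = ⊥ := by
    refine eq_bot_iff.mpr ?_
    rintro _ ⟨a, ha, rfl⟩
    exact (Submodule.mem_bot k).mpr (Ideal.Quotient.eq_zero_iff_mem.mpr ha)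
  have hsp : ⊤ ≤ Submodule.span k (Set.range (mk ∘ b)) := by
    have hmk : Function.Surjective mk := Ideal.Quotient.mk_surjective
    rw [Set.range_comp, ← Submodule.map_span, ← LinearMap.range_eq_top.mpr hmk,
      LinearMap.range_eq_map, ← hspan, Submodule.map_sup, hI, sup_bot_eq]
  rw [Module.finrank_eq_card_basis (Module.Basis.mk hli hsp)]

namespace MvPolynomial

theorem idealOfVars_eq_ker_constantCoeff (σ R : Type*) [CommSemiring R] :
    idealOfVars σ R = RingHom.ker (constantCoeff (σ := σ) (R := R)) := by
  ext p
  rw [← pow_one (idealOfVars σ R), mem_pow_idealOfVars_iff', RingHom.mem_ker, constantCoeff_eq]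
  simp [Finsupp.degree_eq_zero_iff]

theorem isMaximal_idealOfVars (σ k : Type*) [Field k] : (idealOfVars σ k).IsMaximal := by
  rw [idealOfVars_eq_ker_constantCoeff]
  exact RingHom.ker_isMaximal_of_surjective _ fun a => ⟨C a, constantCoeff_C σ a⟩

theorem monomial_one_mem_of_le {σ R : Type*} [CommSemiring R] {I : Ideal (MvPolynomial σ R)}
    {s t : σ →₀ ℕ} (hs : monomial s 1 ∈ I) (hst : s ≤ t) : monomial t (1 : R) ∈ I :=
  I.mem_of_dvd (monomial_dvd_monomial.mpr ⟨Or.inr hst, dvd_rfl⟩) hs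

end MvPolynomial

namespace BrianconSpeder

section Monomials

variable {R : Type*} [CommSemiring R]

noncomputable def expVec (a b c : ℕ) : Fin 3 →₀ ℕ :=
  Finsupp.single 0 a + Finsupp.single 1 b + Finsupp.single 2 c

@[simp] lemma expVec_apply_zero (a b c : ℕ) : expVec a b c 0 = a := by simp [expVec]
@[simp] lemma expVec_apply_one (a b c : ℕ) : expVec a b c 1 = b := by simp [expVec]
@[simp] lemma expVec_apply_two (a b c : ℕ) : expVec a b c 2 = c := by simp [expVec]

lemma finsupp_fin_three_ext_iff {s t : Fin 3 →₀ ℕ} : s = t ↔ s 0 = t 0 ∧ s 1 = t 1 ∧ s 2 = t 2 := by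
  refine ⟨by rintro rfl; simp, fun ⟨h0, h1, h2⟩ => Finsupp.ext fun i => ?_⟩
  fin_cases i <;> assumption

lemma finsupp_fin_three_le_iff {s t : Fin 3 →₀ ℕ} : s ≤ t ↔ s 0 ≤ t 0 ∧ s 1 ≤ t 1 ∧ s 2 ≤ t 2 := by
  refine ⟨fun h => ⟨h 0, h 1, h 2⟩, fun ⟨h0, h1, h2⟩ i => ?_⟩
  fin_cases i <;> assumption

lemma eq_expVec (s : Fin 3 →₀ ℕ) : s = expVec (s 0) (s 1) (s 2) := by
  simp [finsupp_fin_three_ext_iff]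

variable (R) in
noncomputable def xyz (a b c : ℕ) : MvPolynomial (Fin 3) R := monomial (expVec a b c) 1

lemma xyz_eq (a b c : ℕ) : xyz R a b c = X 0 ^ a * X 1 ^ b * X 2 ^ c := by
  simp only [xyz, X_pow_eq_monomial, monomial_mul, one_mul, expVec]

lemma coeff_mul_xyz (q : MvPolynomial (Fin 3) R) (a b c a' b' c' : ℕ) :
    coeff (expVec a b c) (q * xyz R a' b' c') =
      if a' ≤ a ∧ b' ≤ b ∧ c' ≤ c then coeff (expVec (a - a') (b - b') (c - c')) q else 0 := by
  rw [xyz, coeff_mul_monomial', mul_one]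
  simp only [finsupp_fin_three_le_iff, expVec_apply_zero, expVec_apply_one, expVec_apply_two]
  congr 2
  simp [finsupp_fin_three_ext_iff]

lemma coeff_xyz (a b c a' b' c' : ℕ) :
    coeff (expVec a b c) (xyz R a' b' c') = if a' = a ∧ b' = b ∧ c' = c then 1 else 0 := by
  simp only [xyz, coeff_monomial, finsupp_fin_three_ext_iff, expVec_apply_zero, expVec_apply_one,
    expVec_apply_two]

lemma xyz_mem_of_le {I : Ideal (MvPolynomial (Fin 3) R)} {a b c a' b' c' : ℕ}
    (h : xyz R a' b' c' ∈ I) (ha : a' ≤ a) (hb : b' ≤ b) (hc : c' ≤ c) : xyz R a b c ∈ I :=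
  monomial_one_mem_of_le h (by simp [finsupp_fin_three_le_iff, ha, hb, hc])

end Monomials

noncomputable def paramIdeal : Ideal (MvPolynomial (Fin 3) ℚ) :=
  Ideal.span {X 1 ^ 7 + 15 * X 0 ^ 14, X 0 * X 1 ^ 6, X 2 ^ 4}

lemma paramIdeal_eq_span_xyz : paramIdeal =
    Ideal.span {xyz ℚ 0 7 0 + (15 : ℚ) • xyz ℚ 14 0 0, xyz ℚ 1 6 0, xyz ℚ 0 0 4} := by
  simp [paramIdeal, xyz_eq, smul_eq_C_mul, map_ofNat]

lemma C_inv_fifteen_mul : C (15⁻¹ : ℚ) * 15 = (1 : MvPolynomial (Fin 3) ℚ) := by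
  rw [← map_ofNat C 15, ← C_mul, inv_mul_cancel₀ (by norm_num), C_1]

lemma X_zero_pow_fifteen_mem_paramIdeal : (X 0 : MvPolynomial (Fin 3) ℚ) ^ 15 ∈ paramIdeal := by
  have h₁ : X 1 ^ 7 + 15 * X 0 ^ 14 ∈ paramIdeal := Ideal.subset_span (by simp)
  have h₂ : X 0 * X 1 ^ 6 ∈ paramIdeal := Ideal.subset_span (by simp)
  have key : (X 0 : MvPolynomial (Fin 3) ℚ) ^ 15 =
      C 15⁻¹ * X 0 * (X 1 ^ 7 + 15 * X 0 ^ 14) - C 15⁻¹ * X 1 * (X 0 * X 1 ^ 6) := by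
    linear_combination (-(X 0 : MvPolynomial (Fin 3) ℚ) ^ 15) * C_inv_fifteen_mul
  rw [key]
  exact sub_mem (Ideal.mul_mem_left _ _ h₁) (Ideal.mul_mem_left _ _ h₂)

lemma X_one_pow_thirteen_mem_paramIdeal : (X 1 : MvPolynomial (Fin 3) ℚ) ^ 13 ∈ paramIdeal := by
  have h₁ : X 1 ^ 7 + 15 * X 0 ^ 14 ∈ paramIdeal := Ideal.subset_span (by simp)
  have h₂ : X 0 * X 1 ^ 6 ∈ paramIdeal := Ideal.subset_span (by simp)
  have key : (X 1 : MvPolynomial (Fin 3) ℚ) ^ 13 =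
      X 1 ^ 6 * (X 1 ^ 7 + 15 * X 0 ^ 14) - 15 * X 0 ^ 13 * (X 0 * X 1 ^ 6) := by
    ring
  rw [key]
  exact sub_mem (Ideal.mul_mem_left _ _ h₁) (Ideal.mul_mem_left _ _ h₂)

lemma X_two_pow_four_mem_paramIdeal : (X 2 : MvPolynomial (Fin 3) ℚ) ^ 4 ∈ paramIdeal :=
  Ideal.subset_span (by simp)

lemma xyz_mem_paramIdeal {a b c : ℕ} (h : 15 ≤ a ∨ 13 ≤ b ∨ 1 ≤ a ∧ 6 ≤ b ∨ 4 ≤ c) :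
    xyz ℚ a b c ∈ paramIdeal := by
  rcases h with h | h | ⟨ha, hb⟩ | h
  · exact xyz_mem_of_le (by simpa [xyz_eq] using X_zero_pow_fifteen_mem_paramIdeal)
      h (Nat.zero_le _) (Nat.zero_le _)
  · exact xyz_mem_of_le (by simpa [xyz_eq] using X_one_pow_thirteen_mem_paramIdeal)
      (Nat.zero_le _) h (Nat.zero_le _)
  · exact xyz_mem_of_le (Ideal.subset_span (by simp [xyz_eq])) ha hb (Nat.zero_le _)
  · exact xyz_mem_of_le (by simpa [xyz_eq] using X_two_pow_four_mem_paramIdeal)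
      (Nat.zero_le _) (Nat.zero_le _) h

def standardExps : Finset (ℕ × ℕ × ℕ) :=
  (Finset.range 14 ×ˢ Finset.range 13 ×ˢ Finset.range 4).filter fun e => e.1 = 0 ∨ e.2.1 ≤ 5

lemma mem_standardExps {a b c : ℕ} :
    (a, b, c) ∈ standardExps ↔ a ≤ 13 ∧ b ≤ 12 ∧ c ≤ 3 ∧ (a = 0 ∨ b ≤ 5) := by
  simp only [standardExps, Finset.mem_filter, Finset.mem_product, Finset.mem_range]
  omega

set_option maxRecDepth 10000 in
lemma card_standardExps : standardExps.card = 364 := by decide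

-- Modulo `I`, `x^14 ≡ -y^7/15`; the correction is switched off for `b < 7`,
-- where `b - 7` truncates.
noncomputable def dualCoeff (a b c : ℕ) : MvPolynomial (Fin 3) ℚ →ₗ[ℚ] ℚ :=
  lcoeff ℚ (expVec a b c) -
    (if 7 ≤ b then 15⁻¹ else 0 : ℚ) • lcoeff ℚ (expVec (a + 14) (b - 7) c)

lemma dualCoeff_eq_zero_of_mem {a b c : ℕ} (h : (a, b, c) ∈ standardExps)
    {p : MvPolynomial (Fin 3) ℚ} (hp : p ∈ paramIdeal) : dualCoeff a b c p = 0 := by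
  rw [mem_standardExps] at h
  rw [paramIdeal_eq_span_xyz] at hp
  refine LinearMap.map_eq_zero_of_mem_ideal_span _ ?_ hp
  rintro s (rfl | rfl | rfl) q <;> by_cases hb : 7 ≤ b <;>
    simp only [dualCoeff, hb, if_true, if_false, mul_add, mul_smul_comm, map_add, map_smul,
      LinearMap.sub_apply, LinearMap.smul_apply, lcoeff_apply,
      coeff_mul_xyz] <;> split_ifs <;> simp_all <;> omega

lemma dualCoeff_xyz {a b c a' b' c' : ℕ} (h' : (a', b', c') ∈ standardExps) :
    dualCoeff a b c (xyz ℚ a' b' c') = if a' = a ∧ b' = b ∧ c' = c then 1 else 0 := by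
  rw [mem_standardExps] at h'
  simp only [dualCoeff, LinearMap.sub_apply, LinearMap.smul_apply, lcoeff_apply, coeff_xyz]
  rw [if_neg (show ¬(a' = a + 14 ∧ b' = b - 7 ∧ c' = c) by omega), smul_zero, sub_zero]

noncomputable def standardMonomial (e : standardExps) : MvPolynomial (Fin 3) ℚ :=
  xyz ℚ e.1.1 e.1.2.1 e.1.2.2

lemma xyz_mem_span_standardMonomial_sup (a b c : ℕ) :
    xyz ℚ a b c ∈
      Submodule.span ℚ (Set.range standardMonomial) ⊔ paramIdeal.restrictScalars ℚ := by
  by_cases hstd : (a, b, c) ∈ standardExps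
  · exact Submodule.mem_sup_left (Submodule.subset_span ⟨⟨(a, b, c), hstd⟩, rfl⟩)
  by_cases hI : 15 ≤ a ∨ 13 ≤ b ∨ 1 ≤ a ∧ 6 ≤ b ∨ 4 ≤ c
  · exact Submodule.mem_sup_right (xyz_mem_paramIdeal hI)
  obtain ⟨rfl, hb, hc⟩ : a = 14 ∧ b ≤ 5 ∧ c ≤ 3 := by rw [mem_standardExps] at hstd; omega
  have hred : xyz ℚ 14 b c = C 15⁻¹ * xyz ℚ 0 b c * (X 1 ^ 7 + 15 * X 0 ^ 14) -
      (15⁻¹ : ℚ) • xyz ℚ 0 (b + 7) c := by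
    simp only [xyz_eq, smul_eq_C_mul]
    linear_combination
      (-(X 0 ^ 14 * X 1 ^ b * X 2 ^ c : MvPolynomial (Fin 3) ℚ)) * C_inv_fifteen_mul
  rw [hred]
  have hstd' : (0, b + 7, c) ∈ standardExps := by rw [mem_standardExps]; omega
  exact sub_mem
    (Submodule.mem_sup_right (Ideal.mul_mem_left _ _ (Ideal.subset_span (by simp))))
    (Submodule.mem_sup_left (Submodule.smul_mem _ _ (Submodule.subset_span ⟨⟨_, hstd'⟩, rfl⟩)))

lemma span_standardMonomial_sup_eq_top :
    Submodule.span ℚ (Set.range standardMonomial) ⊔ paramIdeal.restrictScalars ℚ = ⊤ := by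
  rw [eq_top_iff, ← (basisMonomials (Fin 3) ℚ).span_eq, Submodule.span_le]
  rintro _ ⟨s, rfl⟩
  rw [coe_basisMonomials, eq_expVec s]
  exact xyz_mem_span_standardMonomial_sup _ _ _

lemma finrank_quotient_paramIdeal :
    Module.finrank ℚ (MvPolynomial (Fin 3) ℚ ⧸ paramIdeal) = 364 := by
  classical
  rw [Ideal.finrank_quotient_eq_card_of_dual paramIdeal standardMonomial
    (LinearMap.pi fun e : standardExps => dualCoeff e.1.1 e.1.2.1 e.1.2.2) _ _
    span_standardMonomial_sup_eq_top, Fintype.card_coe, card_standardExps]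
  · intro p hp
    funext ⟨⟨a, b, c⟩, he⟩
    exact dualCoeff_eq_zero_of_mem he hp
  · rintro ⟨⟨a', b', c'⟩, he'⟩
    funext ⟨⟨a, b, c⟩, he⟩
    simp [standardMonomial, dualCoeff_xyz he', Pi.single_apply, eq_comm]

lemma span_X_eq_idealOfVars :
    Ideal.span {X 0, X 1, X 2} = idealOfVars (Fin 3) ℚ := by
  congr 1
  ext p
  simp [Fin.exists_fin_succ, eq_comm]

lemma paramIdeal_le_idealOfVars : paramIdeal ≤ idealOfVars (Fin 3) ℚ := by
  rw [idealOfVars_eq_ker_constantCoeff, paramIdeal, Ideal.span_le]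
  rintro _ (rfl | rfl | rfl) <;> simp

lemma radical_paramIdeal : paramIdeal.radical = Ideal.span {X 0, X 1, X 2} := by
  rw [span_X_eq_idealOfVars]
  refine le_antisymm ?_ ?_
  · exact (Ideal.radical_mono paramIdeal_le_idealOfVars).trans_eq
      (isMaximal_idealOfVars _ _).isPrime.radical
  · rw [← span_X_eq_idealOfVars, Ideal.span_le]
    rintro _ (rfl | rfl | rfl)
    · exact ⟨15, X_zero_pow_fifteen_mem_paramIdeal⟩
    · exact ⟨13, X_one_pow_thirteen_mem_paramIdeal⟩
    · exact ⟨4, X_two_pow_four_mem_paramIdeal⟩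

lemma isPrimary_paramIdeal : paramIdeal.IsPrimary := by
  refine Ideal.isPrimary_of_isMaximal_radical ?_
  rw [radical_paramIdeal, span_X_eq_idealOfVars]
  exact isMaximal_idealOfVars _ _

lemma range_pderiv :
    Set.range (fun i : Fin 3 => pderiv i (X 2 ^ 5 + X 0 * X 1 ^ 7 + X 0 ^ 15 :
      MvPolynomial (Fin 3) ℚ)) =
      {X 1 ^ 7 + 15 * X 0 ^ 14, 7 * X 0 * X 1 ^ 6, 5 * X 2 ^ 4} := by
  ext p
  simp [Fin.exists_fin_succ, eq_comm, mul_left_comm (X 0 : MvPolynomial (Fin 3) ℚ) 7, mul_assoc]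

lemma span_jacobian_eq_paramIdeal :
    Ideal.span {X 1 ^ 7 + 15 * X 0 ^ 14, (7 : MvPolynomial (Fin 3) ℚ) * X 0 * X 1 ^ 6,
      5 * X 2 ^ 4} = paramIdeal := by
  have hunit (r : ℚ) (hr : r ≠ 0) : IsUnit (C r : MvPolynomial (Fin 3) ℚ) :=
    (isUnit_iff_ne_zero.mpr hr).map C
  rw [paramIdeal, Ideal.span_insert, Ideal.span_insert, Ideal.span_insert, Ideal.span_insert,
    mul_assoc, ← map_ofNat C 7, ← map_ofNat C 5,
    Ideal.span_singleton_mul_left_unit (hunit 7 (by norm_num)),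
    Ideal.span_singleton_mul_left_unit (hunit 5 (by norm_num))]

end BrianconSpeder

open BrianconSpeder in
/-- For `F₀ = z^5 + x y^7 + x^15` in `ℚ[x,y,z]`, the Jacobian ideal
`J(F₀) = (y^7 + 15x^14, 7xy^6, 5z^4)` is `m`-primary and the multiplicity of the
parameter ideal `(y^7 + 15x^14, x y^6, z^4)` (computed, in this homogeneous
system-of-parameters Cohen–Macaulay situation, as the colength) equals `364`. -/
theorem briancon_speder_t_zero_multiplicity
    (F : MvPolynomial (Fin 3) ℚ) (hF : F = X 2 ^ 5 + X 0 * X 1 ^ 7 + X 0 ^ 15)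
    (J : Ideal (MvPolynomial (Fin 3) ℚ))
    (hJ : J = Ideal.span (Set.range fun i : Fin 3 => pderiv i F))
    (m : Ideal (MvPolynomial (Fin 3) ℚ))
    (hm : m = Ideal.span {X 0, X 1, X 2}) :
    J = Ideal.span {X 1 ^ 7 + 15 * X 0 ^ 14,
        (7 : MvPolynomial (Fin 3) ℚ) * X 0 * X 1 ^ 6, 5 * X 2 ^ 4} ∧
    J.IsPrimary ∧ J.radical = m ∧
    Module.finrank ℚ (MvPolynomial (Fin 3) ℚ ⧸
      (Ideal.span {X 1 ^ 7 + 15 * X 0 ^ 14, X 0 * X 1 ^ 6, X 2 ^ 4} :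
        Ideal (MvPolynomial (Fin 3) ℚ))) = 364 := by
  subst hF hJ hm
  rw [range_pderiv, span_jacobian_eq_paramIdeal]
  exact ⟨rfl, isPrimary_paramIdeal, radical_paramIdeal, finrank_quotient_paramIdeal⟩
end

section
/- Let S be an Artinian local ring and R a finitely generated ℕ^r-graded quotient of a polynomial ring S[X_1(0),…,X_1(s_1),…,X_r(0),…,X_r(s_r)] (where the variables X_i(j) have degree e_i, the i-th unit vector), with Hilbert series HS(R, t) = Σ_u λ(R_u) t^u = N(t_1,…,t_r)/∏_{i=1}^r (1−t_i)^{s_i+1} for a polynomial N ∈ ℤ[t_1,…,t_r]. Write the Hilbert polynomial of R as P(u, R) = Σ_{α=0}^{s} c_α ∏_{i=1}^r C(u_i + α_i, α_i). Then c_α = ((−1)^{|s−α|}/∏_i (s_i−α_i)!) · (∂^{|s−α|}N/∂t_1^{s_1−α_1}⋯∂t_r^{s_r−α_r}) evaluated at (1,…,1). -/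
/-!
Write `W = ∏ᵢ (1 - tᵢ)^(sᵢ+1)`. The generating series of the Hilbert polynomial is
`Q = ∑_β c_β ∏ᵢ (1 - tᵢ)^-(βᵢ+1)`, so `Q W = P := ∑_β c_β ∏ᵢ (1 - tᵢ)^(sᵢ-βᵢ)` is a polynomial,
and `∂^γ P (1)` with `γ = s - α` kills every term except `β = α`, which gives
`(-1)^|γ| γ! c_α`. It remains to show `∂^γ (N - P) (1) = 0`, where `N - P = D W` and the
coefficients of `D = HS - Q` vanish on an orthant `u ≥ M`. Expanding
`∂^γ F (1) = ∑_d F_d ∏ᵢ (dᵢ)_(γᵢ)` (falling factorials) over a large box and moving `W` onto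
the weights rewrites this as `∑_v D_v ∏ᵢ δᵢ(vᵢ)`, where `δᵢ` is an `(sᵢ+1)`-st finite difference
of a polynomial of degree `γᵢ ≤ sᵢ`, truncated at the edge of the box. Away from that edge `δᵢ`
vanishes, so each term dies: either some `vᵢ < M` and `δᵢ(vᵢ) = 0`, or `v ≥ M` and `D_v = 0`.
-/

open MvPolynomial

/-- The iterated partial derivative `∂^{|α|}/∂t_1^{α_1}⋯∂t_r^{α_r}`. -/
noncomputable def iterD {r : ℕ} (α : Fin r → ℕ)
    (P : MvPolynomial (Fin r) ℚ) : MvPolynomial (Fin r) ℚ :=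
  (List.ofFn fun i : Fin r =>
    (fun Q : MvPolynomial (Fin r) ℚ => pderiv i Q)^[α i]).foldr (· ∘ ·) id P

open Finset

lemma sum_range_neg_one_pow_mul_choose_mul_choose_add (n c x : ℕ) :
    ∑ k ∈ range (n + 1), (-1 : ℤ) ^ k * n.choose k * (x + k).choose c =
      (-1) ^ n * (fwdDiff 1)^[n] (fun y : ℕ => (y.choose c : ℤ)) x := by
  rw [fwdDiff_iter_eq_sum_shift, mul_sum]
  refine sum_congr rfl fun k hk => ?_
  obtain ⟨j, rfl⟩ := Nat.exists_eq_add_of_le (Nat.lt_succ_iff.1 (mem_range.1 hk))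
  simp only [smul_eq_mul, mul_one, Nat.add_sub_cancel_left]
  have hj : (-1 : ℤ) ^ j * (-1) ^ j = 1 := by rw [← pow_add]; exact Even.neg_one_pow ⟨j, rfl⟩
  linear_combination (-(-1) ^ k * ((k + j).choose k : ℤ) * ((x + k).choose c : ℤ)) * hj

lemma fwdDiff_iter_choose_eq_zero {n c : ℕ} (h : c < n) :
    (fwdDiff 1)^[n] (fun y : ℕ => (y.choose c : ℤ)) = 0 := by
  obtain ⟨j, rfl⟩ := Nat.exists_eq_add_of_lt h
  have hc := fwdDiff_iter_choose 0 c
  rw [add_zero] at hc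
  rw [show c + j + 1 = (j + 1) + c by ring, Function.iterate_add_apply, hc]
  simp only [Nat.choose_zero_right, Nat.cast_one, Function.iterate_succ_apply, fwdDiff_const]
  exact Function.iterate_fixed (by simp) j

lemma sum_range_neg_one_pow_mul_choose_mul_descFactorial {R : Type*} [CommRing R] (m c : ℕ) :
    ∑ k ∈ range (m + 1), (-1 : R) ^ k * m.choose k * k.descFactorial c =
      if c = m then (-1 : R) ^ m * m.factorial else 0 := by
  have h := sum_range_neg_one_pow_mul_choose_mul_choose_add m c 0
  rw [fwdDiff_iter_choose_zero] at h
  have hR := congrArg (Int.cast : ℤ → R) h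
  push_cast [zero_add] at hR
  simp_rw [Nat.descFactorial_eq_factorial_mul_choose, Nat.cast_mul,
    mul_left_comm _ (c.factorial : R), ← mul_sum, hR]
  by_cases hcm : c = m
  · subst hcm
    simp only [if_true]
    ring
  · simp [hcm, Ne.symm hcm]

lemma PowerSeries.coeff_one_sub_X_pow {R : Type*} [CommRing R] (m j : ℕ) :
    coeff j ((1 - X : PowerSeries R) ^ m) = (-1) ^ j * m.choose j := by
  have : (1 - X : PowerSeries R) ^ m = rescale (-1) ((1 + Polynomial.X) ^ m : Polynomial R) := by
    simp [sub_eq_add_neg]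
  rw [this, coeff_rescale, Polynomial.coeff_coe, Polynomial.coeff_one_add_X_pow]

lemma sum_range_ite_neg_one_pow_mul_choose_mul_choose {R : Type*} [CommRing R] (b x : ℕ) :
    ∑ k ∈ range (b + 2),
        (if k ≤ x then (-1 : R) ^ k * (b + 1).choose k * (x - k + b).choose b else 0) =
      if x = 0 then 1 else 0 := by
  have h := congrArg (PowerSeries.coeff x)
    (PowerSeries.mk_add_choose_mul_one_sub_pow_eq_one (S := R) b)
  rw [PowerSeries.coeff_mul, PowerSeries.coeff_one, ← Finset.Nat.sum_antidiagonal_swap] at h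
  simp only [Prod.fst_swap, Prod.snd_swap] at h
  rw [Finset.Nat.sum_antidiagonal_eq_sum_range_succ (fun k i =>
    PowerSeries.coeff i (PowerSeries.mk fun n => ((b + n).choose b : R)) *
      PowerSeries.coeff k ((1 - PowerSeries.X) ^ (b + 1)))] at h
  rw [← h, ← sum_filter]
  refine sum_subset (fun k hk => ?_) (fun k hk hk' => ?_) |>.trans (sum_congr rfl fun k _ => ?_)
  · simp only [mem_filter, mem_range] at hk ⊢
    omega
  · simp only [mem_range, mem_filter, not_and, not_le] at hk hk'
    rw [Nat.choose_eq_zero_of_lt (by omega : b + 1 < k)]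
    simp
  · simp only [PowerSeries.coeff_mk, PowerSeries.coeff_one_sub_X_pow]
    rw [add_comm (x - k)]
    ring

section TruncAltSum

variable (R : Type*) [CommRing R]

/-- Up to the sign `(-1)^n`, the `n`-th forward difference of `y ↦ y.descFactorial c` at `x`,
with the terms beyond `T` cut off. -/
noncomputable def truncAltSum (n c T x : ℕ) : R :=
  ∑ k ∈ range (n + 1), if x + k ≤ T then (-1) ^ k * n.choose k * (x + k).descFactorial c else 0

variable {R}

lemma truncAltSum_eq_zero {n c T x : ℕ} (hc : c < n) (hx : x + n ≤ T) :
    truncAltSum R n c T x = 0 := by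
  have hsum : ∑ k ∈ range (n + 1), (-1 : ℤ) ^ k * n.choose k * (x + k).descFactorial c = 0 := by
    simp_rw [Nat.descFactorial_eq_factorial_mul_choose, Nat.cast_mul,
      mul_left_comm _ (c.factorial : ℤ), ← mul_sum, sum_range_neg_one_pow_mul_choose_mul_choose_add,
      fwdDiff_iter_choose_eq_zero hc, Pi.zero_apply, mul_zero]
  rw [truncAltSum, sum_congr rfl fun k hk => if_pos (by rw [mem_range] at hk; omega)]
  exact_mod_cast congrArg (Int.cast : ℤ → R) hsum

end TruncAltSum

section Expansion

variable {σ R : Type*} [CommRing R]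

lemma one_sub_X_pow_eq_sum (i : σ) (m : ℕ) :
    (1 - X i : MvPolynomial σ R) ^ m =
      ∑ k ∈ range (m + 1), monomial (Finsupp.single i k) ((-1 : R) ^ k * m.choose k) := by
  rw [sub_eq_neg_add, add_pow]
  refine sum_congr rfl fun k _ => ?_
  rw [one_pow, mul_one, neg_pow, X_pow_eq_monomial, ← map_natCast (C (σ := σ)),
    show (-1 : MvPolynomial σ R) ^ k = C ((-1) ^ k) by simp, C_mul_monomial, mul_one,
    mul_comm, C_mul_monomial, mul_comm]

variable [Fintype σ]

lemma coe_prod_one_sub_X_pow (m : σ → ℕ) :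
    ((∏ i, (1 - X i) ^ m i : MvPolynomial σ R) : MvPowerSeries σ R) =
      ∏ i, (1 - MvPowerSeries.X i) ^ m i := by
  simp only [← coeToMvPowerSeries.ringHom_apply, map_prod, map_pow, map_sub, map_one]
  simp only [coeToMvPowerSeries.ringHom_apply, coe_X]

variable [DecidableEq σ]

lemma prod_one_sub_X_pow_eq_sum (m : σ → ℕ) :
    ∏ i, (1 - X i : MvPolynomial σ R) ^ m i =
      ∑ e ∈ Fintype.piFinset fun i => range (m i + 1),
        monomial (Finsupp.equivFunOnFinite.symm e)
          (∏ i, (-1) ^ e i * ((m i).choose (e i) : R)) := by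
  simp_rw [one_sub_X_pow_eq_sum, prod_univ_sum, Finsupp.equivFunOnFinite_symm_eq_sum,
    monomial_sum_prod]

lemma coeff_mul_prod_one_sub_X_pow (D : MvPowerSeries σ R) (m u : σ → ℕ) :
    MvPowerSeries.coeff (Finsupp.equivFunOnFinite.symm u)
        (D * ∏ i, (1 - MvPowerSeries.X i) ^ m i) =
      ∑ e ∈ Fintype.piFinset fun i => range (m i + 1),
        if ∀ i, e i ≤ u i then
          MvPowerSeries.coeff (Finsupp.equivFunOnFinite.symm (u - e)) D *
            ∏ i, (-1) ^ e i * ((m i).choose (e i) : R)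
        else 0 := by
  rw [← coe_prod_one_sub_X_pow, prod_one_sub_X_pow_eq_sum]
  simp only [← coeToMvPowerSeries.ringHom_apply, map_sum]
  simp only [coeToMvPowerSeries.ringHom_apply, coe_monomial, mul_sum, map_sum,
    MvPowerSeries.coeff_mul_monomial]
  refine sum_congr rfl fun e _ => ?_
  have hsub : Finsupp.equivFunOnFinite.symm u - Finsupp.equivFunOnFinite.symm e =
      Finsupp.equivFunOnFinite.symm (u - e) := by
    ext; simp
  rw [hsub]
  exact if_congr (by simp [Finsupp.le_def]) rfl rfl

end Expansion

lemma le_of_mem_piFinset_range {ι : Type*} [Fintype ι] [DecidableEq ι] {s β : ι → ℕ}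
    (hβ : β ∈ Fintype.piFinset fun i => range (s i + 1)) (i : ι) : β i ≤ s i :=
  Nat.lt_succ_iff.1 (mem_range.1 (Fintype.mem_piFinset.1 hβ i))

section DerivAtOne

variable {R : Type*} [CommRing R] {r : ℕ}

lemma pderiv_pow_monomial (i : Fin r) (k : ℕ) (d : Fin r →₀ ℕ) (a : R) :
    ((pderiv i).toLinearMap ^ k) (monomial d a) =
      monomial (d - Finsupp.single i k) (a * (d i).descFactorial k) := by
  induction k with
  | zero => simp
  | succ k ih =>
    rw [pow_succ', Module.End.mul_apply, ih, Derivation.coeFn_coe, pderiv_monomial,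
      tsub_tsub, ← Finsupp.single_add, Finsupp.tsub_apply, Finsupp.single_eq_same,
      Nat.descFactorial_succ, mul_assoc, Nat.cast_mul, mul_comm ((d i - k : ℕ) : R), add_comm]

lemma list_prod_pderiv_pow_monomial (γ : Fin r → ℕ) (d : Fin r →₀ ℕ) (a : R)
    {l : List (Fin r)} (hl : l.Nodup) :
    (l.map fun i => (pderiv i).toLinearMap ^ γ i).prod (monomial d a) =
      monomial (d - (l.map fun i => Finsupp.single i (γ i)).sum)
        (a * (l.map fun i => ((d i).descFactorial (γ i) : R)).prod) := by
  induction l with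
  | nil => simp
  | cons j l ih =>
    rw [List.nodup_cons] at hl
    have hj : (l.map fun i => Finsupp.single i (γ i)).sum j = 0 := by
      rw [← Finsupp.applyAddHom_apply, map_list_sum, List.map_map]
      refine List.sum_eq_zero fun x hx => ?_
      obtain ⟨i, hi, rfl⟩ := List.mem_map.1 hx
      exact Finsupp.single_eq_of_ne (by rintro rfl; exact hl.1 hi)
    simp only [List.map_cons, List.prod_cons, List.sum_cons, Module.End.mul_apply, ih hl.2,
      pderiv_pow_monomial, Finsupp.tsub_apply, hj, tsub_zero, tsub_tsub, add_comm]
    congr 1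
    ring

noncomputable def derivAtOne (γ : Fin r → ℕ) : MvPolynomial (Fin r) R →ₗ[R] R :=
  (aeval fun _ => (1 : R)).toLinearMap ∘ₗ (List.ofFn fun i => (pderiv i).toLinearMap ^ γ i).prod

lemma derivAtOne_monomial (γ : Fin r → ℕ) (d : Fin r →₀ ℕ) (a : R) :
    derivAtOne γ (monomial d a) = a * ∏ i, ((d i).descFactorial (γ i) : R) := by
  rw [derivAtOne, LinearMap.comp_apply, List.ofFn_eq_map,
    list_prod_pderiv_pow_monomial γ d a (List.nodup_finRange r)]
  simp [← List.ofFn_eq_map, List.prod_ofFn, eval_monomial]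

lemma derivAtOne_eq_sum (γ : Fin r → ℕ) (P : MvPolynomial (Fin r) R)
    {S : Finset (Fin r →₀ ℕ)} (hS : P.support ⊆ S) :
    derivAtOne γ P = ∑ d ∈ S, coeff d P * ∏ i, ((d i).descFactorial (γ i) : R) := by
  conv_lhs => rw [P.as_sum, map_sum]
  simp only [derivAtOne_monomial]
  exact Finset.sum_subset hS fun d _ hd => by rw [notMem_support_iff.1 hd, zero_mul]

lemma eval_one_iterD (γ : Fin r → ℕ) (P : MvPolynomial (Fin r) ℚ) :
    eval (fun _ => 1) (iterD γ P) = derivAtOne γ P := by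
  have foldr_coe : ∀ l : List (Module.End ℚ (MvPolynomial (Fin r) ℚ)),
      (l.map (⇑)).foldr (· ∘ ·) id = ⇑l.prod := by
    intro l
    induction l with
    | nil => rfl
    | cons f l ih => simp only [List.map_cons, List.foldr_cons, ih, List.prod_cons,
        Module.End.coe_mul]
  have : (List.ofFn fun i : Fin r => (fun Q : MvPolynomial (Fin r) ℚ => pderiv i Q)^[γ i]) =
      (List.ofFn fun i => (pderiv i).toLinearMap ^ γ i).map (⇑) := by
    simp [List.map_ofFn, Function.comp_def, Module.End.coe_pow]
  rw [iterD, this, foldr_coe, derivAtOne, LinearMap.comp_apply, AlgHom.toLinearMap_apply,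
    aeval_eq_eval]

lemma derivAtOne_prod_one_sub_X_pow (γ m : Fin r → ℕ) :
    derivAtOne γ (∏ i, (1 - X i : MvPolynomial (Fin r) R) ^ m i) =
      if γ = m then ∏ i, (-1) ^ m i * ((m i).factorial : R) else 0 := by
  rw [prod_one_sub_X_pow_eq_sum, map_sum]
  simp only [derivAtOne_monomial, Finsupp.coe_equivFunOnFinite_symm, ← prod_mul_distrib]
  rw [← prod_univ_sum (fun i => range (m i + 1))
    (fun i k => (-1 : R) ^ k * (m i).choose k * k.descFactorial (γ i))]
  simp only [sum_range_neg_one_pow_mul_choose_mul_descFactorial, Fintype.prod_ite_zero]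
  simp only [← funext_iff]

lemma derivAtOne_sum_smul_prod_one_sub_X_pow (s α : Fin r → ℕ)
    (hα : α ∈ Fintype.piFinset fun i => range (s i + 1))
    (c : (Fin r → ℕ) → R) :
    derivAtOne (fun i => s i - α i) (∑ β ∈ Fintype.piFinset fun i => range (s i + 1),
        c β • ∏ i, (1 - X i : MvPolynomial (Fin r) R) ^ (s i - β i)) =
      c α * ∏ i, (-1) ^ (s i - α i) * ((s i - α i).factorial : R) := by
  simp only [map_sum, map_smul, derivAtOne_prod_one_sub_X_pow, smul_eq_mul, mul_ite, mul_zero]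
  refine (sum_eq_single α (fun β hβ hne => if_neg fun h => hne ?_) (absurd hα)).trans (if_pos rfl)
  exact funext fun i => by
    have := congrFun h i
    have := le_of_mem_piFinset_range hβ i
    have := le_of_mem_piFinset_range hα i
    omega

end DerivAtOne

lemma sum_box_ite_le_tsub {ι M : Type*} [Fintype ι] [DecidableEq ι] [AddCommMonoid M]
    (T : ℕ) (e : ι → ℕ) [∀ u : ι → ℕ, Decidable (∀ i, e i ≤ u i)]
    (φ : (ι → ℕ) → (ι → ℕ) → M) :
    ∑ u ∈ Fintype.piFinset fun _ => range (T + 1),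
        (if ∀ i, e i ≤ u i then φ (u - e) u else 0) =
      ∑ v ∈ Fintype.piFinset fun _ => range (T + 1),
        (if ∀ i, v i + e i ≤ T then φ v (v + e) else 0) := by
  rw [← sum_filter, ← sum_filter]
  have hcancel : ∀ u : ι → ℕ, (∀ i, e i ≤ u i) → u - e + e = u := fun u hu =>
    funext fun i => Nat.sub_add_cancel (hu i)
  refine sum_nbij' (· - e) (· + e) (fun u hu => ?_) (fun v hv => ?_) (fun u hu => ?_)
    (fun v _ => ?_) (fun u hu => ?_)
  all_goals simp only [mem_filter, Fintype.mem_piFinset, mem_range] at *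
  · exact ⟨fun i => by have := hu.1 i; simp; omega,
      fun i => by have := hu.1 i; have := hu.2 i; simp; omega⟩
  · exact ⟨fun i => by have := hv.2 i; simp; omega, fun i => by simp⟩
  · exact hcancel u hu.2
  · exact funext fun i => by simp
  · rw [hcancel u hu.2]

section Pairing

variable {R : Type*} [CommRing R] {r : ℕ}

lemma derivAtOne_eq_sum_coeff_mul_prod_truncAltSum (γ m : Fin r → ℕ)
    (F : MvPolynomial (Fin r) R) (D : MvPowerSeries (Fin r) R) (T : ℕ)
    (hF : ∀ d ∈ F.support, ∀ i, d i ≤ T)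
    (hFD : (F : MvPowerSeries (Fin r) R) = D * ∏ i, (1 - MvPowerSeries.X i) ^ m i) :
    derivAtOne γ F = ∑ v ∈ Fintype.piFinset fun _ => range (T + 1),
      MvPowerSeries.coeff (Finsupp.equivFunOnFinite.symm v) D *
        ∏ i, truncAltSum R (m i) (γ i) T (v i) := by
  have hsupp : F.support ⊆ (Fintype.piFinset fun _ => range (T + 1)).map
      Finsupp.equivFunOnFinite.symm.toEmbedding := fun d hd =>
    mem_map_equiv.2 (Fintype.mem_piFinset.2 fun i => mem_range.2 (Nat.lt_succ_of_le (hF d hd i)))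
  rw [derivAtOne_eq_sum γ F hsupp, sum_map]
  simp only [Equiv.coe_toEmbedding, ← coeff_coe, hFD, coeff_mul_prod_one_sub_X_pow, sum_mul,
    ite_mul, zero_mul]
  rw [sum_comm]
  refine (sum_congr rfl fun e _ => sum_box_ite_le_tsub T e fun v u =>
    MvPowerSeries.coeff (Finsupp.equivFunOnFinite.symm v) D *
      (∏ i, (-1) ^ e i * ((m i).choose (e i) : R)) *
      ∏ i, ((Finsupp.equivFunOnFinite.symm u i).descFactorial (γ i) : R)).trans ?_
  rw [sum_comm]
  refine sum_congr rfl fun v _ => ?_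
  simp only [truncAltSum, prod_univ_sum, mul_sum]
  refine sum_congr rfl fun e _ => ?_
  rw [Fintype.prod_ite_zero]
  split_ifs
  · simp only [Finsupp.coe_equivFunOnFinite_symm, Pi.add_apply, prod_mul_distrib]
    ring
  · rw [mul_zero]

lemma derivAtOne_eq_zero_of_coeff_eq_zero {γ s : Fin r → ℕ} (hγ : ∀ i, γ i ≤ s i)
    {F : MvPolynomial (Fin r) R} {D : MvPowerSeries (Fin r) R} {M : ℕ}
    (hFD : (F : MvPowerSeries (Fin r) R) = D * ∏ i, (1 - MvPowerSeries.X i) ^ (s i + 1))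
    (hD : ∀ d : Fin r →₀ ℕ, (∀ i, M ≤ d i) → MvPowerSeries.coeff d D = 0) :
    derivAtOne γ F = 0 := by
  set T := F.totalDegree + M + ∑ i, s i + 1
  have hsT : ∀ i, M + (s i + 1) ≤ T := fun i => by
    have := single_le_sum (fun j _ => Nat.zero_le (s j)) (mem_univ i)
    omega
  have hF : ∀ d ∈ F.support, ∀ i, d i ≤ T := fun d hd i => by
    have := (monomial_le_degreeOf i hd).trans (degreeOf_le_totalDegree F i)
    omega
  rw [derivAtOne_eq_sum_coeff_mul_prod_truncAltSum γ (fun i => s i + 1) F D T hF hFD]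
  refine sum_eq_zero fun v _ => ?_
  by_cases hv : ∀ i, M ≤ v i
  · rw [hD _ (by simpa using hv), zero_mul]
  · obtain ⟨i, hi⟩ := not_forall.1 hv
    rw [prod_eq_zero (mem_univ i) (truncAltSum_eq_zero (Nat.lt_succ_of_le (hγ i))
      (by have := hsT i; omega)), mul_zero]

end Pairing

section ProdInvOneSubPow

variable {σ R : Type*} [Fintype σ] [CommRing R]

noncomputable def prodInvOneSubPow (β : σ → ℕ) : MvPowerSeries σ R :=
  fun d => ∏ i, ((d i + β i).choose (β i) : R)

lemma coeff_prodInvOneSubPow (β : σ → ℕ) (d : σ →₀ ℕ) :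
    MvPowerSeries.coeff d (prodInvOneSubPow β : MvPowerSeries σ R) =
      ∏ i, ((d i + β i).choose (β i) : R) :=
  rfl

lemma prodInvOneSubPow_mul [DecidableEq σ] (β : σ → ℕ) :
    prodInvOneSubPow β * ∏ i, (1 - MvPowerSeries.X i) ^ (β i + 1) = (1 : MvPowerSeries σ R) := by
  ext d
  obtain ⟨u, rfl⟩ := Finsupp.equivFunOnFinite.symm.surjective d
  have hu : Finsupp.equivFunOnFinite.symm u = 0 ↔ ∀ i, u i = 0 := by
    simp [Finsupp.ext_iff]
  rw [coeff_mul_prod_one_sub_X_pow, MvPowerSeries.coeff_one, if_congr hu rfl rfl,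
    ← Fintype.prod_boole]
  rw [← prod_congr rfl fun i _ =>
    sum_range_ite_neg_one_pow_mul_choose_mul_choose (R := R) (β i) (u i), prod_univ_sum]
  refine sum_congr rfl fun e _ => ?_
  rw [Fintype.prod_ite_zero, coeff_prodInvOneSubPow]
  split_ifs
  · rw [← prod_mul_distrib]
    exact prod_congr rfl fun i _ => by
      rw [Finsupp.coe_equivFunOnFinite_symm, Pi.sub_apply, mul_comm]
  · rfl

lemma prodInvOneSubPow_mul_of_le [DecidableEq σ] {β s : σ → ℕ} (hβ : ∀ i, β i ≤ s i) :
    prodInvOneSubPow β * ∏ i, (1 - MvPowerSeries.X i) ^ (s i + 1) =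
      (∏ i, (1 - MvPowerSeries.X i) ^ (s i - β i) : MvPowerSeries σ R) := by
  have hs : ∀ i, s i + 1 = (β i + 1) + (s i - β i) := fun i => by have := hβ i; omega
  rw [prod_congr rfl fun i _ => by rw [hs i, pow_add], prod_mul_distrib, ← mul_assoc,
    prodInvOneSubPow_mul, one_mul]

lemma sum_smul_prodInvOneSubPow_mul [DecidableEq σ] (s : σ → ℕ) (c : (σ → ℕ) → R) :
    (∑ β ∈ Fintype.piFinset fun i => range (s i + 1), c β • prodInvOneSubPow β) *
        ∏ i, (1 - MvPowerSeries.X i) ^ (s i + 1) =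
      ((∑ β ∈ Fintype.piFinset fun i => range (s i + 1),
        c β • ∏ i, (1 - X i) ^ (s i - β i) : MvPolynomial σ R) : MvPowerSeries σ R) := by
  rw [← coeToMvPowerSeries.ringHom_apply, map_sum, sum_mul]
  refine sum_congr rfl fun β hβ => ?_
  rw [smul_mul_assoc, prodInvOneSubPow_mul_of_le (le_of_mem_piFinset_range hβ),
    coeToMvPowerSeries.ringHom_apply, MvPolynomial.coe_smul, coe_prod_one_sub_X_pow]

end ProdInvOneSubPow

theorem hilbert_polynomial_coefficients_general {r : ℕ} (s : Fin r → ℕ)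
    (H : (Fin r → ℕ) → ℕ)
    (Nq : MvPolynomial (Fin r) ℚ)
    (Hs : MvPowerSeries (Fin r) ℚ)
    (hHs : ∀ d : Fin r →₀ ℕ, MvPowerSeries.coeff d Hs = (H fun i => d i : ℚ))
    (hseries : Hs * ∏ i, (1 - MvPowerSeries.X i) ^ (s i + 1)
      = (Nq : MvPowerSeries (Fin r) ℚ))
    (c : (Fin r → ℕ) → ℚ)
    (hpoly : ∃ M : ℕ, ∀ u : Fin r → ℕ, (∀ i, M ≤ u i) →
      (H u : ℚ) = ∑ α ∈ Fintype.piFinset (fun i : Fin r => Finset.range (s i + 1)),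
        c α * ∏ i, ((u i + α i).choose (α i) : ℚ)) :
    ∀ α ∈ Fintype.piFinset (fun i : Fin r => Finset.range (s i + 1)),
      c α = ((-1 : ℚ) ^ (∑ i, (s i - α i)) / ∏ i, ((s i - α i).factorial : ℚ)) *
        eval (fun _ => (1 : ℚ)) (iterD (fun i => s i - α i) Nq) := by
  intro α hα
  obtain ⟨M, hM⟩ := hpoly
  set Q : MvPowerSeries (Fin r) ℚ :=
    ∑ β ∈ Fintype.piFinset fun i => range (s i + 1), c β • prodInvOneSubPow β
  set P : MvPolynomial (Fin r) ℚ :=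
    ∑ β ∈ Fintype.piFinset fun i => range (s i + 1), c β • ∏ i, (1 - X i) ^ (s i - β i)
  have hHQ : ∀ d : Fin r →₀ ℕ, (∀ i, M ≤ d i) → MvPowerSeries.coeff d (Hs - Q) = 0 := by
    intro d hd
    simp [Q, hHs, hM _ hd, coeff_prodInvOneSubPow]
  have hNP : (Nq - P : MvPolynomial (Fin r) ℚ) =
      (Hs - Q) * ∏ i, (1 - MvPowerSeries.X i) ^ (s i + 1) := by
    rw [sub_mul, hseries, sum_smul_prodInvOneSubPow_mul]
    exact map_sub coeToMvPowerSeries.ringHom Nq P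
  have hderiv := derivAtOne_eq_zero_of_coeff_eq_zero (fun i => Nat.sub_le (s i) (α i)) hNP hHQ
  rw [map_sub, sub_eq_zero, derivAtOne_sum_smul_prod_one_sub_X_pow s α hα] at hderiv
  rw [eval_one_iterD, hderiv, prod_mul_distrib, prod_pow_eq_pow_sum]
  have hfact : ∏ i, ((s i - α i).factorial : ℚ) ≠ 0 :=
    prod_ne_zero_iff.2 fun i _ => by positivity
  field_simp
  rw [← pow_mul, pow_mul', neg_one_sq, one_pow, mul_one]

/-- If the Hilbert function `H u = λ(R_u)` of a multigraded algebra has Hilbert series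
`Σ_u H(u) t^u = N(t)/∏_i (1−t_i)^{s_i+1}` and Hilbert polynomial
`P(u) = Σ_{α ≤ s} c_α ∏_i C(u_i+α_i, α_i)`, then
`c_α = ((−1)^{|s−α|}/∏_i (s_i−α_i)!) · (∂^{|s−α|}N/∂t^{s−α})|_{t=(1,…,1)}`. -/
theorem hilbert_polynomial_coefficients {r : ℕ} (s : Fin r → ℕ)
    (H : (Fin r → ℕ) → ℕ)
    (N : MvPolynomial (Fin r) ℤ)
    (Nq : MvPolynomial (Fin r) ℚ) (hNq : Nq = N.map (Int.castRingHom ℚ))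
    (Hs : MvPowerSeries (Fin r) ℚ)
    (hHs : ∀ d : Fin r →₀ ℕ, MvPowerSeries.coeff d Hs = (H fun i => d i : ℚ))
    (hseries : Hs * ∏ i, (1 - MvPowerSeries.X i) ^ (s i + 1)
      = (Nq : MvPowerSeries (Fin r) ℚ))
    (c : (Fin r → ℕ) → ℚ)
    (hpoly : ∃ M : ℕ, ∀ u : Fin r → ℕ, (∀ i, M ≤ u i) →
      (H u : ℚ) = ∑ α ∈ Fintype.piFinset (fun i : Fin r => Finset.range (s i + 1)),
        c α * ∏ i, ((u i + α i).choose (α i) : ℚ)) :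
    ∀ α ∈ Fintype.piFinset (fun i : Fin r => Finset.range (s i + 1)),
      c α = ((-1 : ℚ) ^ (∑ i, (s i - α i)) / ∏ i, ((s i - α i).factorial : ℚ)) *
        eval (fun _ => (1 : ℚ)) (iterD (fun i => s i - α i) Nq) :=
  hilbert_polynomial_coefficients_general s H Nq Hs hHs hseries c hpoly
end
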